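/- arXiv:1307.0099 — 5 statements merged into one kernel-verified Lean document; each statement's English description precedes it below -/
import Mathlib

section
/- Distinct swap permutations of a string P yield distinct swapped versions: if π₁ and π₂ are swap permutations for P with π₁(P) = π₂(P), then π₁ = π₂. -/
/-- Distinct swap permutations of a string P yield distinct swapped versions:
if π₁ and π₂ are swap permutations for P with π₁(P) = π₂(P), then π₁ = π₂. -/
theorem swap_perm_injective_on_swapped_versions {α : Type*} {m : ℕ} (P : Fin m → α)
    (π₁ π₂ : Equiv.Perm (Fin m))
    (ha₁ : ∀ i j : Fin m, π₁ i = j → π₁ j = i)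
    (hb₁ : ∀ i : Fin m, (π₁ i : ℕ) = (i : ℕ) - 1 ∨ (π₁ i : ℕ) = (i : ℕ) ∨ (π₁ i : ℕ) = (i : ℕ) + 1)
    (hc₁ : ∀ i : Fin m, π₁ i ≠ i → P (π₁ i) ≠ P i)
    (ha₂ : ∀ i j : Fin m, π₂ i = j → π₂ j = i)
    (hb₂ : ∀ i : Fin m, (π₂ i : ℕ) = (i : ℕ) - 1 ∨ (π₂ i : ℕ) = (i : ℕ) ∨ (π₂ i : ℕ) = (i : ℕ) + 1)
    (hc₂ : ∀ i : Fin m, π₂ i ≠ i → P (π₂ i) ≠ P i)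
    (heq : ∀ i : Fin m, P (π₁ i) = P (π₂ i)) :
    π₁ = π₂ := by
  have step : ∀ i : Fin m, (∀ j : Fin m, (j : ℕ) < (i : ℕ) → π₁ j = π₂ j) → π₁ i = π₂ i := by
    intro i ih
    by_contra hne
    have h1 : (π₁ i : ℕ) = (i : ℕ) ∨ (π₁ i : ℕ) = (i : ℕ) + 1 := by
      rcases hb₁ i with h | h | h
      · by_cases h0 : (i : ℕ) = 0
        · left; omega
        · exfalso
          have hlt : (π₁ i : ℕ) < (i : ℕ) := by omega
          have hj : π₁ (π₁ i) = i := ha₁ i (π₁ i) rfl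
          have h2 : π₂ (π₁ i) = i := by rw [← ih (π₁ i) hlt]; exact hj
          have h3 : π₂ i = π₁ i := ha₂ (π₁ i) i h2
          exact hne h3.symm
      · left; exact h
      · right; exact h
    have h2 : (π₂ i : ℕ) = (i : ℕ) ∨ (π₂ i : ℕ) = (i : ℕ) + 1 := by
      rcases hb₂ i with h | h | h
      · by_cases h0 : (i : ℕ) = 0
        · left; omega
        · exfalso
          have hlt : (π₂ i : ℕ) < (i : ℕ) := by omega
          have hj : π₂ (π₂ i) = i := ha₂ i (π₂ i) rfl
          have h2 : π₁ (π₂ i) = i := by rw [ih (π₂ i) hlt]; exact hj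
          have h3 : π₁ i = π₂ i := ha₁ (π₂ i) i h2
          exact hne h3
      · left; exact h
      · right; exact h
    rcases h1 with h1 | h1 <;> rcases h2 with h2 | h2
    · exact hne (Fin.ext (by omega))
    · -- π₁ i = i, π₂ i ≠ i
      have e1 : π₁ i = i := Fin.ext h1
      have ne2 : π₂ i ≠ i := fun h => by rw [h] at h2; omega
      have := hc₂ i ne2
      exact this (by rw [← heq i, e1])
    · have e2 : π₂ i = i := Fin.ext h2
      have ne1 : π₁ i ≠ i := fun h => by rw [h] at h1; omega
      have := hc₁ i ne1
      exact this (by rw [heq i, e2])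
    · exact hne (Fin.ext (by omega))
  have main : ∀ n : ℕ, ∀ i : Fin m, (i : ℕ) = n → π₁ i = π₂ i := by
    intro n
    induction n using Nat.strong_induction_on with
    | _ n ih =>
      intro i hin
      exact step i (fun j hj => ih (j : ℕ) (by omega) j rfl)
  exact Equiv.ext fun i => main (i : ℕ) i rfl
end

section
/- The swap automaton A_π(P) accepts a string S if and only if some swapped version P' ∈ Π_P is a suffix of S; hence its language is ⋃_{P'∈Π_P} Σ*P'. -/
/-- Transition function of the swap automaton A_π(P) for a pattern P of length m.
States are 0,...,2m-1 (q_0 = 0, final state q_m). -/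
def sdelta {α : Type*} (P : ℕ → α) (m : ℕ) (q : ℕ) (c : α) : Set ℕ :=
  {j | (q = 0 ∧ j = 0) ∨
       (q = 0 ∧ c = P 0 ∧ j = 1) ∨
       (q = 0 ∧ c = P 1 ∧ j = m + 1) ∨
       (1 ≤ q ∧ q < m ∧ c = P q ∧ j = q + 1) ∨
       (1 ≤ q ∧ q < m - 1 ∧ c = P (q + 1) ∧ j = q + m + 1) ∨
       (m + 1 ≤ q ∧ q < 2 * m ∧ c = P (q - m - 1) ∧ j = q - m + 1)}

/-- δ*(q₀, S[0..n-1]) for the swap automaton. -/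
def sdeltaStar {α : Type*} (P : ℕ → α) (m : ℕ) (S : ℕ → α) : ℕ → Set ℕ
  | 0 => {0}
  | n + 1 => ⋃ q ∈ sdeltaStar P m S n, sdelta P m q (S n)

/-- A swap permutation of the prefix of length `q` of `P`. -/
def IsSwapPerm {α : Type*} (P : ℕ → α) (q : ℕ) (π : ℕ → ℕ) : Prop :=
  (∀ i, q ≤ i → π i = i) ∧
  (∀ i < q, π i < q) ∧
  (∀ i < q, ∀ j, π i = j → π j = i) ∧
  (∀ i < q, π i = i - 1 ∨ π i = i ∨ π i = i + 1) ∧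
  (∀ i < q, π i ≠ i → P (π i) ≠ P i)

lemma isSwapPerm_id {α : Type*} (P : ℕ → α) (q : ℕ) : IsSwapPerm P q (fun i => i) :=
  ⟨fun _ _ => rfl, fun i hi => hi, fun _ _ _ h => h ▸ rfl,
   fun _ _ => Or.inr (Or.inl rfl), fun _ _ h => absurd rfl h⟩

lemma isSwapPerm_mono {α : Type*} {P : ℕ → α} {q r : ℕ} {π : ℕ → ℕ}
    (h : IsSwapPerm P q π) (hqr : q ≤ r) : IsSwapPerm P r π := by
  obtain ⟨hfix, hlt, hinv, hadj, hne⟩ := h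
  refine ⟨fun i hi => hfix i (by omega), ?_, ?_, ?_, ?_⟩
  · intro i hi
    by_cases hq : i < q
    · exact lt_of_lt_of_le (hlt i hq) hqr
    · rw [hfix i (by omega)]; exact hi
  · intro i hi j hj
    by_cases hq : i < q
    · exact hinv i hq j hj
    · rw [hfix i (by omega)] at hj
      subst hj; exact hfix i (by omega)
  · intro i hi
    by_cases hq : i < q
    · exact hadj i hq
    · exact Or.inr (Or.inl (hfix i (by omega)))
  · intro i hi hne'
    by_cases hq : i < q
    · exact hne i hq hne'
    · exact absurd (hfix i (by omega)) hne'

lemma isSwapPerm_extendSwap {α : Type*} {P : ℕ → α} {i : ℕ} {π : ℕ → ℕ}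
    (h : IsSwapPerm P i π) (hPP : P i ≠ P (i + 1)) :
    IsSwapPerm P (i + 2) (fun j => if j = i then i + 1 else if j = i + 1 then i else π j) := by
  obtain ⟨hfix, hlt, hinv, hadj, hne⟩ := h
  refine ⟨?_, ?_, ?_, ?_, ?_⟩
  · intro j hj
    simp only
    rw [if_neg (by omega), if_neg (by omega)]
    exact hfix j (by omega)
  · intro j hj
    simp only
    by_cases h1 : j = i
    · rw [if_pos h1]; omega
    · rw [if_neg h1]
      by_cases h2 : j = i + 1
      · rw [if_pos h2]; omega
      · rw [if_neg h2]; have := hlt j (by omega); omega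
  · intro j hj k hk
    simp only at hk ⊢
    by_cases h1 : j = i
    · rw [if_pos h1] at hk
      subst hk
      rw [if_neg (by omega), if_pos rfl]
      omega
    · rw [if_neg h1] at hk
      by_cases h2 : j = i + 1
      · rw [if_pos h2] at hk
        subst hk
        rw [if_pos rfl]
        omega
      · rw [if_neg h2] at hk
        have hji : j < i := by omega
        have hkk : π j < i := hlt j hji
        rw [← hk, if_neg (by omega), if_neg (by omega)]
        exact hinv j hji (π j) rfl
  · intro j hj
    simp only
    by_cases h1 : j = i
    · rw [if_pos h1]; omega
    · rw [if_neg h1]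
      by_cases h2 : j = i + 1
      · rw [if_pos h2]; omega
      · rw [if_neg h2]; exact hadj j (by omega)
  · intro j hj hne'
    simp only at hne' ⊢
    by_cases h1 : j = i
    · rw [if_pos h1] at hne' ⊢
      subst h1
      exact fun hc => hPP hc.symm
    · rw [if_neg h1] at hne' ⊢
      by_cases h2 : j = i + 1
      · rw [if_pos h2] at hne' ⊢
        subst h2
        exact hPP
      · rw [if_neg h2] at hne' ⊢
        exact hne j (by omega) hne'

/-- The invariant characterizing reachable states of the swap automaton. -/
def SInv {α : Type*} (P : ℕ → α) (m : ℕ) (S : ℕ → α) (n q : ℕ) : Prop :=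
  q = 0 ∨
  (1 ≤ q ∧ q ≤ m ∧ q ≤ n ∧ ∃ π, IsSwapPerm P q π ∧ ∀ t < q, S (n - q + t) = P (π t)) ∨
  (∃ i, i + 1 < m ∧ q = i + m + 1 ∧ i + 1 ≤ n ∧ S (n - 1) = P (i + 1) ∧
    ∃ π, IsSwapPerm P i π ∧ ∀ t < i, S (n - 1 - i + t) = P (π t))

lemma mem_sdeltaStar_inv {α : Type*} (P : ℕ → α) (m : ℕ) (hm : 2 ≤ m) (S : ℕ → α) :
    ∀ n q, q ∈ sdeltaStar P m S n → SInv P m S n q := by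
  intro n
  induction n with
  | zero =>
    intro q hq
    simp only [sdeltaStar, Set.mem_singleton_iff] at hq
    exact Or.inl hq
  | succ n ih =>
    intro q' hq'
    simp only [sdeltaStar, Set.mem_iUnion] at hq'
    obtain ⟨q, hq, hmem⟩ := hq'
    simp only [sdelta, Set.mem_setOf_eq] at hmem
    rcases hmem with ⟨_, h0⟩ | ⟨_, hc, h1⟩ | ⟨_, hc, h1⟩ | ⟨hq1, hqm, hc, hj⟩ |
      ⟨hq1, hqm, hc, hj⟩ | ⟨hq1, hqm, hc, hj⟩
    · exact Or.inl h0
    · -- q' = 1, closed of length 1 with identity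
      subst h1
      refine Or.inr (Or.inl ⟨le_refl 1, by omega, by omega, (fun i => i), isSwapPerm_id P 1, ?_⟩)
      intro t ht
      interval_cases t
      simpa using hc
    · -- q' = m+1, pending with i = 0
      subst h1
      exact Or.inr (Or.inr ⟨0, by omega, by omega, by omega, by simpa using hc,
        (fun i => i), isSwapPerm_id P 0, by omega⟩)
    · -- advance closed q → q+1
      subst hj
      rcases ih q hq with h0 | ⟨_, _, hqn, π, hπ, hmatch⟩ | ⟨i, hi, hqi, _, _, _⟩
      · omega
      · have hqq : π q = q := hπ.1 q le_rfl
        refine Or.inr (Or.inl ⟨by omega, by omega, by omega, π,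
          isSwapPerm_mono hπ (by omega), ?_⟩)
        intro t ht
        by_cases htq : t < q
        · have harr : n + 1 - (q + 1) + t = n - q + t := by omega
          rw [harr]
          exact hmatch t htq
        · have htq' : t = q := by omega
          subst htq'
          have harr : n + 1 - (t + 1) + t = n := by omega
          rw [harr, hqq]
          exact hc
      · omega
    · -- enter pending state from closed q
      subst hj
      rcases ih q hq with h0 | ⟨_, _, hqn, π, hπ, hmatch⟩ | ⟨i, hi, hqi, _, _, _⟩
      · omega
      · refine Or.inr (Or.inr ⟨q, by omega, rfl, by omega, by simpa using hc, π, hπ, ?_⟩)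
        intro t ht
        have harr : n + 1 - 1 - q + t = n - q + t := by omega
        rw [harr]
        exact hmatch t ht
      · omega
    · -- resolve pending state → closed of length i+2
      subst hj
      rcases ih q hq with h0 | ⟨_, hqle, _, _, _⟩ | ⟨i, hi, hqi, hin, hS, π, hπ, hmatch⟩
      · omega
      · omega
      · subst hqi
        have hqi' : i + m + 1 - m - 1 = i := by omega
        rw [hqi'] at hc
        have hj' : i + m + 1 - m + 1 = i + 2 := by omega
        rw [hj']
        by_cases hPP : P i = P (i + 1)
        · -- equal characters: keep π (identity on i, i+1)
          refine Or.inr (Or.inl ⟨by omega, by omega, by omega, π,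
            isSwapPerm_mono hπ (by omega), ?_⟩)
          intro t ht
          by_cases ht1 : t < i
          · have harr : n + 1 - (i + 2) + t = n - 1 - i + t := by omega
            rw [harr]
            exact hmatch t ht1
          · by_cases ht2 : t = i
            · subst ht2
              have harr : n + 1 - (t + 2) + t = n - 1 := by omega
              rw [harr, hπ.1 t le_rfl, hS, hPP]
            · have ht3 : t = i + 1 := by omega
              subst ht3
              have harr : n + 1 - (i + 2) + (i + 1) = n := by omega
              rw [harr, hπ.1 (i + 1) (by omega), hc, hPP]
        · -- unequal characters: swap i and i+1
          refine Or.inr (Or.inl ⟨by omega, by omega, by omega,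
            (fun j => if j = i then i + 1 else if j = i + 1 then i else π j),
            isSwapPerm_extendSwap hπ hPP, ?_⟩)
          intro t ht
          by_cases ht1 : t < i
          · simp only
            rw [if_neg (by omega), if_neg (by omega)]
            have harr : n + 1 - (i + 2) + t = n - 1 - i + t := by omega
            rw [harr]
            exact hmatch t ht1
          · by_cases ht2 : t = i
            · subst ht2
              have harr : n + 1 - (t + 2) + t = n - 1 := by omega
              rw [harr, hS]
              simp
            · have ht3 : t = i + 1 := by omega
              subst ht3
              have harr : n + 1 - (i + 2) + (i + 1) = n := by omega
              rw [harr, hc]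
              simp

lemma zero_mem_sdeltaStar {α : Type*} (P : ℕ → α) (m : ℕ) (S : ℕ → α) :
    ∀ n, 0 ∈ sdeltaStar P m S n := by
  intro n
  induction n with
  | zero => simp [sdeltaStar]
  | succ n ih =>
    simp only [sdeltaStar, Set.mem_iUnion]
    exact ⟨0, ih, by simp [sdelta]⟩

lemma run_sdeltaStar {α : Type*} (P : ℕ → α) (m : ℕ) (hm : 2 ≤ m) (S : ℕ → α) (n : ℕ)
    (π : ℕ → ℕ)
    (hfix : ∀ i, m ≤ i → π i = i)
    (hlt : ∀ i < m, π i < m)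
    (hinv : ∀ i < m, ∀ j, π i = j → π j = i)
    (hadj : ∀ i < m, π i = i - 1 ∨ π i = i ∨ π i = i + 1)
    (hmn : m ≤ n)
    (hmatch : ∀ t < m, S (n - m + t) = P (π t)) :
    m ∈ sdeltaStar P m S n := by
  have key : ∀ t ≤ m, (if π t + 1 = t then t + m else t) ∈ sdeltaStar P m S (n - m + t) := by
    intro t
    induction t with
    | zero =>
      intro _
      rw [if_neg (by omega)]
      exact zero_mem_sdeltaStar P m S (n - m)
    | succ t iht =>
      intro ht1
      have ht : t < m := ht1
      have hst := iht (le_of_lt ht)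
      have harith : n - m + (t + 1) = (n - m + t) + 1 := by omega
      rw [harith]
      simp only [sdeltaStar, Set.mem_iUnion]
      have hchar : S (n - m + t) = P (π t) := hmatch t ht
      by_cases hid : π t = t
      · -- identity at t
        rw [if_neg (by omega)] at hst
        have hnx : π (t + 1) ≠ t := by
          intro hcon
          by_cases htm : t + 1 < m
          · have := hinv (t + 1) htm t hcon
            omega
          · have := hfix (t + 1) (by omega)
            omega
        rw [if_neg (by omega)]
        refine ⟨t, hst, ?_⟩
        simp only [sdelta, Set.mem_setOf_eq]
        by_cases ht0 : t = 0
        · subst ht0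
          exact Or.inr (Or.inl ⟨by trivial, by rw [hchar, hid], by trivial⟩)
        · exact Or.inr (Or.inr (Or.inr (Or.inl ⟨by omega, ht, by rw [hchar, hid], by trivial⟩)))
      · rcases hadj t ht with hA | hA | hA
        · -- π t = t - 1 (with t ≥ 1)
          have ht0 : 1 ≤ t := by omega
          rw [if_pos (by omega)] at hst
          have hnx : π (t + 1) ≠ t := by
            intro hcon
            by_cases htm : t + 1 < m
            · have := hinv (t + 1) htm t hcon
              omega
            · have := hfix (t + 1) (by omega)
              omega
          rw [if_neg (by omega)]
          refine ⟨t + m, hst, ?_⟩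
          simp only [sdelta, Set.mem_setOf_eq]
          refine Or.inr (Or.inr (Or.inr (Or.inr (Or.inr ⟨by omega, by omega, ?_, by omega⟩))))
          have harr : t + m - m - 1 = t - 1 := by omega
          rw [harr, hchar, hA]
        · omega
        · -- π t = t + 1
          have htm : t + 1 < m := by
            have := hlt t ht
            omega
          have hx : π (t + 1) = t := hinv t ht (t + 1) hA
          rw [if_neg (by omega)] at hst
          rw [if_pos (by omega)]
          refine ⟨t, hst, ?_⟩
          simp only [sdelta, Set.mem_setOf_eq]
          by_cases ht0 : t = 0
          · subst ht0
            exact Or.inr (Or.inr (Or.inl ⟨by trivial, by rw [hchar, hA], by omega⟩))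
          · exact Or.inr (Or.inr (Or.inr (Or.inr (Or.inl
              ⟨by omega, by omega, by rw [hchar, hA], by omega⟩))))
  have hfin := key m le_rfl
  have hπm : π m = m := hfix m le_rfl
  rw [if_neg (by omega)] at hfin
  have harr : n - m + m = n := by omega
  rwa [harr] at hfin

/-- The swap automaton A_π(P) accepts S iff some swapped version P' ∈ Π_P
is a suffix of S; hence its language is ⋃_{P'∈Π_P} Σ*P'. -/
theorem swap_automaton_accepts_iff {α : Type*} (P : ℕ → α) (m : ℕ) (hm : 2 ≤ m)
    (S : ℕ → α) (n : ℕ) :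
    m ∈ sdeltaStar P m S n ↔
      ∃ π : ℕ → ℕ,
        (∀ i, m ≤ i → π i = i) ∧
        (∀ i < m, π i < m) ∧
        (∀ i < m, ∀ j, π i = j → π j = i) ∧
        (∀ i < m, π i = i - 1 ∨ π i = i ∨ π i = i + 1) ∧
        (∀ i < m, π i ≠ i → P (π i) ≠ P i) ∧
        (m ≤ n ∧ ∀ t < m, S (n - m + t) = P (π t)) := by
  constructor
  · intro h
    rcases mem_sdeltaStar_inv P m hm S n m h with h0 | ⟨_, _, hmn, π, hπ, hmatch⟩ |
      ⟨i, hi, hqi, _, _, _⟩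
    · omega
    · obtain ⟨h1, h2, h3, h4, h5⟩ := hπ
      exact ⟨π, h1, h2, h3, h4, h5, hmn, hmatch⟩
    · omega
  · rintro ⟨π, h1, h2, h3, h4, _, hmn, hmatch⟩
    exact run_sdeltaStar P m hm S n π h1 h2 h3 h4 hmn hmatch
end

section
/- Every string P of length m admits a 1-factorization of size at most m, and the greedy factorization (taking each factor maximal) yields a 1-factorization of minimal size. -/
/-- The greedy factor length at the start of l: the largest i ≤ |l| with l.take i duplicate-free
(the next character, if any, then necessarily occurs in the factor). -/
def oneLen {α : Type*} [DecidableEq α] (l : List α) : ℕ :=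
  Nat.findGreatest (fun i => (l.take i).Nodup) l.length

/-- The greedy 1-factorization: repeatedly take a maximal duplicate-free prefix.
(For a nonempty list the greedy factor length is at least 1, so `max 1` is redundant
but makes termination evident.) -/
def greedy {α : Type*} [DecidableEq α] (l : List α) : List (List α) :=
  if h : l = [] then []
  else l.take (max 1 (oneLen l)) :: greedy (l.drop (max 1 (oneLen l)))
termination_by l.length
decreasing_by
  have h1 : 0 < l.length := List.length_pos_iff.mpr h
  have h2 := le_max_left 1 (oneLen l)
  simp only [List.length_drop]
  omega

/-!
Every suffix of `P` has a 1-factorization with no more factors than a given one of `P`: cutting a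
prefix off a factorization only shortens or deletes factors. If `u :: us` is a 1-factorization of
`P`, then `u` is a duplicate-free prefix of `P`, hence no longer than the greedy first factor, so
what greedy leaves after its first factor is a suffix of `us.flatten`. Induction on `|P|` then
shows that greedy needs at most `|us|` further factors.
-/

section Factorization

variable {α : Type*}

def IsOneFactorization (us : List (List α)) (l : List α) : Prop :=
  us.flatten = l ∧ ∀ u ∈ us, u ≠ [] ∧ u.Nodup

theorem isOneFactorization_singletons (l : List α) :
    IsOneFactorization (l.map fun a => [a]) l := by
  refine ⟨?_, ?_⟩
  · induction l with
    | nil => rfl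
    | cons a t ih => simp [ih]
  · simp

theorem IsOneFactorization.exists_tail {us : List (List α)} {l : List α}
    (h : IsOneFactorization us l) :
    ∃ vs, IsOneFactorization vs l.tail ∧ vs.length ≤ us.length := by
  obtain ⟨rfl, hus⟩ := h
  match us, hus with
  | [], _ => exact ⟨[], ⟨rfl, by simp⟩, le_rfl⟩
  | [] :: _, hus => exact absurd rfl (hus [] (by simp)).1
  | [_] :: us, hus =>
    exact ⟨us, ⟨rfl, fun v hv => hus v (by simp [hv])⟩, by simp⟩
  | (a :: b :: u) :: us, hus =>
    refine ⟨(b :: u) :: us, ⟨rfl, ?_⟩, le_rfl⟩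
    intro v hv
    rcases List.mem_cons.mp hv with rfl | hv
    · exact ⟨List.cons_ne_nil _ _, (hus (a :: b :: u) (by simp)).2.of_cons⟩
    · exact hus v (List.mem_cons_of_mem _ hv)

theorem IsOneFactorization.exists_drop {us : List (List α)} {l : List α}
    (h : IsOneFactorization us l) (k : ℕ) :
    ∃ vs, IsOneFactorization vs (l.drop k) ∧ vs.length ≤ us.length := by
  induction k with
  | zero => exact ⟨us, h, le_rfl⟩
  | succ k ih =>
    obtain ⟨vs, hvs, hlen⟩ := ih
    obtain ⟨ws, hws, hlen'⟩ := hvs.exists_tail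
    exact ⟨ws, List.tail_drop ▸ hws, hlen'.trans hlen⟩

end Factorization

section Greedy

variable {α : Type*} [DecidableEq α]

theorem nodup_take_oneLen (l : List α) : (l.take (oneLen l)).Nodup :=
  Nat.findGreatest_spec (P := fun i => (l.take i).Nodup) (Nat.zero_le _) (by simp)

theorem List.Nodup.length_le_oneLen {u l : List α} (hu : u.Nodup) (hul : u <+: l) :
    u.length ≤ oneLen l :=
  Nat.le_findGreatest hul.length_le (List.prefix_iff_eq_take.mp hul ▸ hu)

theorem one_le_oneLen {l : List α} (h : l ≠ []) : 1 ≤ oneLen l := by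
  obtain ⟨a, t, rfl⟩ := List.exists_cons_of_ne_nil h
  exact List.nodup_singleton a |>.length_le_oneLen (by simp)

theorem length_drop_oneLen_lt {l : List α} (h : l ≠ []) :
    (l.drop (oneLen l)).length < l.length := by
  have := List.length_pos_iff.mpr h
  have := one_le_oneLen h
  simp only [List.length_drop]
  omega

theorem greedy_of_ne_nil {l : List α} (h : l ≠ []) :
    greedy l = l.take (oneLen l) :: greedy (l.drop (oneLen l)) := by
  rw [greedy, dif_neg h, max_eq_right (one_le_oneLen h)]

theorem isOneFactorization_greedy (l : List α) : IsOneFactorization (greedy l) l := by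
  by_cases h : l = []
  · subst h
    simp [greedy, IsOneFactorization]
  obtain ⟨hflat, hfactors⟩ := isOneFactorization_greedy (l.drop (oneLen l))
  rw [greedy_of_ne_nil h]
  refine ⟨by rw [List.flatten_cons, hflat, List.take_append_drop], ?_⟩
  intro u hu
  rcases List.mem_cons.mp hu with rfl | hu
  · refine ⟨?_, nodup_take_oneLen l⟩
    rw [← List.length_pos_iff, List.length_take]
    exact lt_min (one_le_oneLen h) (List.length_pos_iff.mpr h)
  · exact hfactors u hu
termination_by l.length
decreasing_by exact length_drop_oneLen_lt h

theorem length_greedy_le {us : List (List α)} {l : List α} (h : IsOneFactorization us l) :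
    (greedy l).length ≤ us.length := by
  by_cases hl : l = []
  · simp [hl, greedy]
  obtain ⟨hflat, hfactors⟩ := h
  match us, hflat, hfactors with
  | [], hflat, _ => exact absurd hflat.symm hl
  | u :: us, hflat, hfactors =>
    have hu : u.length ≤ oneLen l :=
      (hfactors u (by simp)).2.length_le_oneLen (hflat ▸ List.prefix_append _ _)
    have hrest : IsOneFactorization us (l.drop u.length) :=
      ⟨by rw [← hflat, List.flatten_cons, List.drop_left], fun v hv => hfactors v (by simp [hv])⟩
    obtain ⟨vs, hvs, hlen⟩ := hrest.exists_drop (oneLen l - u.length)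
    rw [List.drop_drop, Nat.add_sub_cancel' hu] at hvs
    have := length_greedy_le hvs
    rw [greedy_of_ne_nil hl, List.length_cons, List.length_cons]
    omega
termination_by l.length
decreasing_by exact length_drop_oneLen_lt hl

end Greedy

/-- Every string P of length m admits a 1-factorization of size at most m,
and the greedy factorization is a 1-factorization of minimal size. -/
theorem greedy_one_factorization_minimal {α : Type*} [DecidableEq α] (P : List α) :
    (∃ us : List (List α), us.flatten = P ∧ (∀ u ∈ us, u ≠ [] ∧ u.Nodup) ∧
        us.length ≤ P.length) ∧
    ((greedy P).flatten = P ∧ (∀ u ∈ greedy P, u ≠ [] ∧ u.Nodup) ∧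
      ∀ us : List (List α), us.flatten = P → (∀ u ∈ us, u ≠ [] ∧ u.Nodup) →
        (greedy P).length ≤ us.length) := by
  obtain ⟨hsingle_flat, hsingle_factors⟩ := isOneFactorization_singletons P
  obtain ⟨hgreedy_flat, hgreedy_factors⟩ := isOneFactorization_greedy P
  exact ⟨⟨_, hsingle_flat, hsingle_factors, by simp⟩, hgreedy_flat, hgreedy_factors,
    fun us hflat hfactors => length_greedy_le ⟨hflat, hfactors⟩⟩
end

section
/- Let s and i be such that s is even and s+i is even (with s+i < m). Then P_o[s..s+i-1] is a permutation of P[s..s+i-1], and P_e[s+1..s+i-2] is a permutation of P[s+1..s+i-2]; in particular, if the characters of P[s..s+i-1] are pairwise distinct then 1-len(P_o, s) ≥ i and 1-len(P_e, s+1) ≥ i-2. -/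
/-- The map φ on strings of length m (strings modelled as functions ℕ → α). -/
def phi {α : Type*} (m : ℕ) (S : ℕ → α) : ℕ → α :=
  fun i => if m / 2 * 2 ≤ i then S i else if i % 2 = 1 then S (i - 1) else S (i + 1)

/-- P_o = φ(P). -/
def Po {α : Type*} (P : ℕ → α) (m : ℕ) : ℕ → α := phi m P

/-- P_e = P[0]·φ(P[1..m-1]) (φ applied with length m-1 to the shifted string). -/
def Pe {α : Type*} (P : ℕ → α) (m : ℕ) : ℕ → α :=
  fun j => if j = 0 then P 0 else phi (m - 1) (fun t => P (t + 1)) (j - 1)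

lemma swap_perm {α : Type*} (f : ℕ → α) (n : ℕ) (hn : n % 2 = 0) :
    ((List.range n).map (fun t => f (if t % 2 = 0 then t + 1 else t - 1))).Perm
      ((List.range n).map f) := by
  obtain ⟨k, rfl⟩ : ∃ k, n = 2 * k := ⟨n / 2, by omega⟩
  clear hn
  induction k with
  | zero => simp
  | succ k ih =>
    have h2 : 2 * (k + 1) = 2 * k + 1 + 1 := by ring
    rw [h2, List.range_succ, List.range_succ]
    simp only [List.map_append, List.map_cons, List.map_nil]
    rw [List.append_assoc, List.append_assoc]
    refine ih.append ?_
    have e1 : (2 * k) % 2 = 0 := by omega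
    have e2 : (2 * k + 1) % 2 = 1 := by omega
    simp only [e1, e2, if_true, if_pos, if_neg (by omega : ¬ (2 * k + 1) % 2 = 0)]
    have : 2 * k + 1 - 1 = 2 * k := by omega
    rw [this]
    simpa using List.Perm.swap (f (2 * k)) (f (2 * k + 1)) []

/-- If s and s+i are even with s+i < m, then P_o[s..s+i-1] is a permutation
of P[s..s+i-1] and P_e[s+1..s+i-2] is a permutation of P[s+1..s+i-2]; in particular if the
characters of P[s..s+i-1] are pairwise distinct then 1-len(P_o,s) ≥ i and
1-len(P_e,s+1) ≥ i-2. -/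
theorem po_pe_perm_on_even_interval {α : Type*} (P : ℕ → α) (m s i : ℕ)
    (hs : s % 2 = 0) (hsi : (s + i) % 2 = 0) (hlt : s + i < m) :
    ((List.range i).map (fun t => Po P m (s + t))).Perm
      ((List.range i).map (fun t => P (s + t))) ∧
    ((List.range (i - 2)).map (fun t => Pe P m (s + 1 + t))).Perm
      ((List.range (i - 2)).map (fun t => P (s + 1 + t))) ∧
    (Set.InjOn P (Set.Ico s (s + i)) →
      Set.InjOn (Po P m) (Set.Ico s (s + i)) ∧
      Set.InjOn (Pe P m) (Set.Ico (s + 1) (s + i - 1))) := by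
  have hi : i % 2 = 0 := by omega
  -- key bounds
  have hb1 : s + i ≤ m / 2 * 2 := by omega
  have hb2 : s + i - 2 ≤ (m - 1) / 2 * 2 := by omega
  -- value of Po on the interval
  have keyo : ∀ x, s ≤ x → x < s + i →
      Po P m x = P (if x % 2 = 0 then x + 1 else x - 1) := by
    intro x hx1 hx2
    simp only [Po, phi]
    rw [if_neg (by omega)]
    rcases Nat.mod_two_eq_zero_or_one x with h | h
    · have hx : x % 2 = 0 := by omega
      rw [if_neg (by omega), if_pos hx]
    · have hx : x % 2 = 1 := by omega
      rw [if_pos hx, if_neg (by omega)]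
  -- value of Pe on the interval
  have keye : ∀ x, s + 1 ≤ x → x < s + i - 1 →
      Pe P m x = P (if (x - 1) % 2 = 0 then x + 1 else x - 1) := by
    intro x hx1 hx2
    simp only [Pe, phi]
    rw [if_neg (by omega), if_neg (by omega)]
    rcases Nat.mod_two_eq_zero_or_one x with h | h
    · -- x even, x - 1 odd
      have hx : (x - 1) % 2 = 1 := by omega
      rw [if_pos hx, if_neg (by omega)]
      congr 1
      omega
    · have hx : (x - 1) % 2 = 0 := by omega
      rw [if_neg (by omega), if_pos hx]
      congr 1
      omega
  refine ⟨?_, ?_, ?_⟩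
  · have h1 : ((List.range i).map (fun t => Po P m (s + t))) =
        ((List.range i).map (fun t => P (s + (if t % 2 = 0 then t + 1 else t - 1)))) := by
      apply List.map_congr_left
      intro t ht
      rw [List.mem_range] at ht
      rw [keyo (s + t) (by omega) (by omega)]
      rcases Nat.mod_two_eq_zero_or_one t with h | h
      · rw [if_pos (by omega : (s + t) % 2 = 0), if_pos h,
          (by omega : s + (t + 1) = s + t + 1)]
      · rw [if_neg (by omega : ¬ (s + t) % 2 = 0), if_neg (by omega : ¬ t % 2 = 0),
          (by omega : s + (t - 1) = s + t - 1)]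
    rw [h1]
    exact swap_perm (fun t => P (s + t)) i hi
  · have h1 : ((List.range (i - 2)).map (fun t => Pe P m (s + 1 + t))) =
        ((List.range (i - 2)).map
          (fun t => P (s + 1 + (if t % 2 = 0 then t + 1 else t - 1)))) := by
      apply List.map_congr_left
      intro t ht
      rw [List.mem_range] at ht
      rw [keye (s + 1 + t) (by omega) (by omega)]
      rcases Nat.mod_two_eq_zero_or_one t with h | h
      · rw [if_pos (by omega : (s + 1 + t - 1) % 2 = 0), if_pos h,
          (by omega : s + 1 + (t + 1) = s + 1 + t + 1)]
      · rw [if_neg (by omega : ¬ (s + 1 + t - 1) % 2 = 0), if_neg (by omega : ¬ t % 2 = 0),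
          (by omega : s + 1 + (t - 1) = s + 1 + t - 1)]
    rw [h1]
    exact swap_perm (fun t => P (s + 1 + t)) (i - 2) (by omega)
  · intro hinj
    constructor
    · intro x hx y hy hxy
      simp only [Set.mem_Ico] at hx hy
      rw [keyo x hx.1 hx.2, keyo y hy.1 hy.2] at hxy
      rcases Nat.mod_two_eq_zero_or_one x with h | h <;>
        rcases Nat.mod_two_eq_zero_or_one y with h' | h' <;>
        · simp [h, h'] at hxy
          have := hinj (Set.mem_Ico.mpr ⟨by omega, by omega⟩)
            (Set.mem_Ico.mpr ⟨by omega, by omega⟩) hxy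
          omega
    · intro x hx y hy hxy
      simp only [Set.mem_Ico] at hx hy
      rw [keye x hx.1 hx.2, keye y hy.1 hy.2] at hxy
      rcases Nat.mod_two_eq_zero_or_one (x - 1) with h | h <;>
        rcases Nat.mod_two_eq_zero_or_one (y - 1) with h' | h' <;>
        · simp [h, h'] at hxy
          have := hinj (Set.mem_Ico.mpr ⟨by omega, by omega⟩)
            (Set.mem_Ico.mpr ⟨by omega, by omega⟩) hxy
          omega
end

section
/- Let k' be the size of the minimal (greedy) 1-factorization of P and let k be the common size of the factorizations in the 1-collection of P, P_e, P_o. Then k ≤ min(3k' − 2, m). -/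
/-- 1-len(S,s) for a string S of length m: the greatest i ≤ m - s such that the
characters S[s..s+i-1] are pairwise distinct. -/
def oneLenF {α : Type*} [DecidableEq α] (S : ℕ → α) (m s : ℕ) : ℕ :=
  Nat.findGreatest (fun i => ((List.range i).map (fun t => S (s + t))).Nodup) (m - s)

/-- Number of factors of the factorization of a length-m string obtained by repeatedly
taking a factor of length `f s` at position s. (For the factorizations considered here
`f s ≥ 1` whenever `s < m`, so `max 1` is redundant but makes termination evident.) -/
def kWith (f : ℕ → ℕ) (m : ℕ) (s : ℕ) : ℕ :=
  if h : s < m then kWith f m (s + max 1 (f s)) + 1 else 0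
termination_by m - s
decreasing_by
  have := le_max_left 1 (f s)
  omega

/-! Both `P_o` and `P_e` are `P ∘ π` for an injective index map `π` moving every position by
at most one. Hence if `P[a..e)` is the greedy factor of `P` at `a = s - 1`, each of `P`, `P_e`,
`P_o` is pairwise distinct on `[s, e - 1)`, and on `[s, m)` when `e = m`. So from a start `s` of
the 1-collection, at most three steps (`s → ≥ s + 1 → ≥ e - 1 → ≥ e`) pass the end `e` of the
greedy factor at `s`, and at most two reach `m` when that factor is the last one; at `s = 0` two
steps pass `e`, since then `s - 1 = 0`. Counting greedy factors gives `k ≤ 3k' - 2`, and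
`k ≤ m` as every factor is nonempty. -/

def phiIndex (m j : ℕ) : ℕ :=
  if m / 2 * 2 ≤ j then j else if j % 2 = 1 then j - 1 else j + 1

def peIndex (m j : ℕ) : ℕ :=
  if j = 0 then 0 else phiIndex (m - 1) (j - 1) + 1

lemma phi_eq_comp {α : Type*} (m : ℕ) (S : ℕ → α) : phi m S = S ∘ phiIndex m := by
  funext i
  simp only [phi, phiIndex, Function.comp_apply]
  split_ifs <;> rfl

lemma Po_eq_comp {α : Type*} (P : ℕ → α) (m : ℕ) : Po P m = P ∘ phiIndex m :=
  phi_eq_comp m P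

lemma Pe_eq_comp {α : Type*} (P : ℕ → α) (m : ℕ) : Pe P m = P ∘ peIndex m := by
  funext j
  simp only [Pe, peIndex, Function.comp_apply, phi_eq_comp]
  split_ifs <;> rfl

structure IsLocalShuffle (m : ℕ) (π : ℕ → ℕ) : Prop where
  injective : Function.Injective π
  le_apply_add_one : ∀ j, j ≤ π j + 1
  apply_le_add_one : ∀ j, π j ≤ j + 1
  mapsTo : Set.MapsTo π (Set.Iio m) (Set.Iio m)

lemma isLocalShuffle_id (m : ℕ) : IsLocalShuffle m id :=
  ⟨Function.injective_id, fun _ => by simp, fun _ => by simp, Set.mapsTo_id _⟩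

lemma isLocalShuffle_phiIndex (m : ℕ) : IsLocalShuffle m (phiIndex m) where
  injective i j h := by
    simp only [phiIndex] at h
    split_ifs at h <;> omega
  le_apply_add_one j := by simp only [phiIndex]; split_ifs <;> omega
  apply_le_add_one j := by simp only [phiIndex]; split_ifs <;> omega
  mapsTo j hj := by
    simp only [Set.mem_Iio, phiIndex] at hj ⊢
    split_ifs <;> omega

lemma isLocalShuffle_peIndex (m : ℕ) : IsLocalShuffle m (peIndex m) := by
  have hφ := isLocalShuffle_phiIndex (m - 1)
  refine ⟨fun i j h => ?_, fun j => ?_, fun j => ?_, fun j hj => ?_⟩ <;>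
    simp only [peIndex, Set.mem_Iio] at *
  · split_ifs at h
    all_goals first
      | omega
      | have := hφ.injective (show phiIndex (m - 1) (i - 1) =
          phiIndex (m - 1) (j - 1) by omega)
        omega
  · have := hφ.le_apply_add_one (j - 1)
    split_ifs <;> omega
  · have := hφ.apply_le_add_one (j - 1)
    split_ifs <;> omega
  · split_ifs
    · omega
    · have : phiIndex (m - 1) (j - 1) < m - 1 := hφ.mapsTo (show j - 1 < m - 1 by omega)
      omega

namespace IsLocalShuffle

variable {m : ℕ} {π : ℕ → ℕ}

lemma mapsTo_Ico_sub_one (hπ : IsLocalShuffle m π) (t b : ℕ) :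
    Set.MapsTo π (Set.Ico t (b - 1)) (Set.Ico (t - 1) b) := by
  rintro j ⟨h₁, h₂⟩
  have := hπ.le_apply_add_one j
  have := hπ.apply_le_add_one j
  constructor <;> omega

lemma mapsTo_Ico (hπ : IsLocalShuffle m π) (t : ℕ) :
    Set.MapsTo π (Set.Ico t m) (Set.Ico (t - 1) m) := by
  rintro j ⟨h₁, h₂⟩
  have := hπ.le_apply_add_one j
  have : π j < m := hπ.mapsTo h₂
  constructor <;> omega

end IsLocalShuffle

section OneLen

variable {α : Type*} [DecidableEq α] (S : ℕ → α) (m : ℕ)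

omit [DecidableEq α] in
lemma nodup_map_range_iff_injOn (s i : ℕ) :
    ((List.range i).map fun t => S (s + t)).Nodup ↔ Set.InjOn S (Set.Ico s (s + i)) := by
  rw [List.nodup_map_iff_inj_on List.nodup_range]
  constructor
  · rintro h x ⟨hx₁, hx₂⟩ y ⟨hy₁, hy₂⟩ hxy
    have := h (x - s) (by simp only [List.mem_range]; omega) (y - s)
      (by simp only [List.mem_range]; omega)
      (by rwa [Nat.add_sub_cancel' hx₁, Nat.add_sub_cancel' hy₁])
    omega
  · intro h x hx y hy hxy
    simp only [List.mem_range] at hx hy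
    have := h ⟨Nat.le_add_right s x, by omega⟩ ⟨Nat.le_add_right s y, by omega⟩ hxy
    omega

lemma oneLenF_le_sub (s : ℕ) : oneLenF S m s ≤ m - s :=
  Nat.findGreatest_le _

lemma injOn_Ico_add_oneLenF (s : ℕ) : Set.InjOn S (Set.Ico s (s + oneLenF S m s)) :=
  (nodup_map_range_iff_injOn S s _).1 <|
    Nat.findGreatest_spec (P := fun i => ((List.range i).map fun t => S (s + t)).Nodup)
      (Nat.zero_le _) (by simp)

variable {S m}

lemma le_add_oneLenF {s u : ℕ} (hu : u ≤ m) (h : Set.InjOn S (Set.Ico s u)) :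
    u ≤ s + oneLenF S m s := by
  by_cases hsu : u ≤ s
  · omega
  · have : u - s ≤ oneLenF S m s :=
      Nat.le_findGreatest (by omega) <| (nodup_map_range_iff_injOn S s _).2 <| by
        rwa [Nat.add_sub_cancel' (by omega)]
    omega

lemma one_le_oneLenF {s : ℕ} (hs : s < m) : 1 ≤ oneLenF S m s := by
  have := le_add_oneLenF (S := S) (s := s) hs fun x hx y hy _ => by
    simp only [Set.mem_Ico] at hx hy
    omega
  omega

variable (S m)

lemma monotone_add_oneLenF : Monotone fun s => s + oneLenF S m s := by
  intro s t hst
  dsimp only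
  have := oneLenF_le_sub S m s
  by_cases ht : t < s + oneLenF S m s
  · exact le_add_oneLenF (by omega) <| (injOn_Ico_add_oneLenF S m s).mono
      (Set.Ico_subset_Ico_left hst)
  · omega

variable {S m}

lemma IsLocalShuffle.sub_one_le_add_oneLenF_comp {π : ℕ → ℕ} (hπ : IsLocalShuffle m π)
    {t : ℕ} (ht : t < m) :
    t - 1 + oneLenF S m (t - 1) - 1 ≤ t + oneLenF (S ∘ π) m t := by
  have := oneLenF_le_sub S m (t - 1)
  exact le_add_oneLenF (by omega) <|
    (injOn_Ico_add_oneLenF S m (t - 1)).comp (hπ.injective.injOn) (hπ.mapsTo_Ico_sub_one t _)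

lemma IsLocalShuffle.le_add_oneLenF_comp {π : ℕ → ℕ} (hπ : IsLocalShuffle m π)
    {t : ℕ} (ht : t < m) (hlast : m ≤ t - 1 + oneLenF S m (t - 1)) :
    m ≤ t + oneLenF (S ∘ π) m t := by
  have := oneLenF_le_sub S m (t - 1)
  have hend : t - 1 + oneLenF S m (t - 1) = m := by omega
  refine le_add_oneLenF le_rfl ?_
  have := injOn_Ico_add_oneLenF S m (t - 1)
  rw [hend] at this
  exact this.comp hπ.injective.injOn (hπ.mapsTo_Ico t)

end OneLen

section Count

variable (f g : ℕ → ℕ) (m : ℕ)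

lemma kWith_of_lt {s : ℕ} (h : s < m) : kWith f m s = kWith f m (s + max 1 (f s)) + 1 := by
  rw [kWith, dif_pos h]

lemma kWith_of_le {s : ℕ} (h : m ≤ s) : kWith f m s = 0 := by
  rw [kWith, dif_neg (by omega)]

lemma kWith_le_sub (s : ℕ) : kWith f m s ≤ m - s := by
  induction s using kWith.induct f m with
  | case1 s hs ih =>
    rw [kWith_of_lt f m hs]
    have := le_max_left 1 (f s)
    omega
  | case2 s hs => rw [kWith_of_le f m (by omega)]; omega

variable {f g m}

lemma kWith_antitone (hf : Monotone fun s => s + f s) : Antitone (kWith f m) := by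
  intro s
  induction s using kWith.induct f m with
  | case1 s hs ih =>
    intro t hst
    rw [kWith_of_lt f m hs]
    by_cases hnext : s + max 1 (f s) ≤ t
    · exact (ih hnext).trans (Nat.le_succ _)
    · by_cases ht : t < m
      · rw [kWith_of_lt f m ht]
        have := hf hst
        exact Nat.succ_le_succ (ih (by dsimp only at this; omega))
      · rw [kWith_of_le f m (by omega)]; omega
  | case2 s hs =>
    intro t hst
    rw [kWith_of_le f m (by omega), kWith_of_le f m (by omega)]

lemma kWith_le_kWith_add_one (hf : Monotone fun s => s + f s) {s t : ℕ}
    (ht : t ≤ s + max 1 (f s)) : kWith f m s ≤ kWith f m t + 1 := by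
  by_cases hs : s < m
  · rw [kWith_of_lt f m hs]
    exact Nat.succ_le_succ (kWith_antitone hf ht)
  · rw [kWith_of_le f m (by omega)]; omega

lemma kWith_le_kWith_step (hf : Monotone fun s => s + f s)
    (hf_step : ∀ t < m, t - 1 + g (t - 1) - 1 ≤ t + f t) (t : ℕ) :
    kWith f m t ≤ kWith f m (t - 1 + g (t - 1) - 1) + 1 := by
  by_cases ht : t < m
  · have := hf_step t ht
    exact kWith_le_kWith_add_one hf (by omega)
  · rw [kWith_of_le f m (by omega)]; omega

lemma kWith_le_one_of_last (hf : Monotone fun s => s + f s)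
    (hf_last : ∀ t < m, m ≤ t - 1 + g (t - 1) → m ≤ t + f t) {t : ℕ}
    (h : m ≤ t - 1 + g (t - 1)) : kWith f m t ≤ 1 := by
  by_cases ht : t < m
  · have := hf_last t ht h
    have := kWith_le_kWith_add_one (m := m) (s := t) (t := m) hf (by omega)
    rwa [kWith_of_le f m le_rfl] at this
  · rw [kWith_of_le f m (by omega)]; omega

lemma kWith_le_kWith_add_add_three (hf : Monotone fun s => s + f s)
    (hf_step : ∀ t < m, t - 1 + g (t - 1) - 1 ≤ t + f t) (s : ℕ) :
    kWith f m s ≤ kWith f m (s + g s) + 3 := by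
  have h₀ : kWith f m s ≤ kWith f m (s + 1) + 1 := kWith_le_kWith_add_one hf (by omega)
  have h₁ := kWith_le_kWith_step hf hf_step (s + 1)
  have h₂ : kWith f m (s + g s - 1) ≤ kWith f m (s + g s) + 1 :=
    kWith_le_kWith_add_one hf (by omega)
  rw [Nat.add_sub_cancel] at h₁
  omega

lemma kWith_le_two_of_last (hf : Monotone fun s => s + f s)
    (hf_last : ∀ t < m, m ≤ t - 1 + g (t - 1) → m ≤ t + f t) {s : ℕ}
    (h : m ≤ s + g s) : kWith f m s ≤ 2 := by
  have h₀ : kWith f m s ≤ kWith f m (s + 1) + 1 := kWith_le_kWith_add_one hf (by omega)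
  have h₁ := kWith_le_one_of_last (t := s + 1) hf hf_last (by rwa [Nat.add_sub_cancel])
  omega

variable (hf : Monotone fun s => s + f s)
  (hf_step : ∀ t < m, t - 1 + g (t - 1) - 1 ≤ t + f t)
  (hf_last : ∀ t < m, m ≤ t - 1 + g (t - 1) → m ≤ t + f t)
  (hg : ∀ s < m, 1 ≤ g s)
include hf hf_step hf_last hg

lemma kWith_le_three_mul_sub_one (s : ℕ) : kWith f m s ≤ 3 * kWith g m s - 1 := by
  induction s using kWith.induct g m with
  | case1 s hs ih =>
    rw [kWith_of_lt g m hs, max_eq_right (hg s hs)] at *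
    by_cases hE : m ≤ s + g s
    · have := kWith_le_two_of_last hf hf_last hE
      rw [kWith_of_le g m hE]
      omega
    · have := kWith_le_kWith_add_add_three hf hf_step s
      have : 1 ≤ kWith g m (s + g s) := by rw [kWith_of_lt g m (by omega)]; omega
      omega
  | case2 s hs => rw [kWith_of_le f m (by omega)]; omega

lemma kWith_zero_le_three_mul_sub_two : kWith f m 0 ≤ 3 * kWith g m 0 - 2 := by
  by_cases hm : 0 < m
  · rw [kWith_of_lt g m hm, max_eq_right (hg 0 hm), zero_add]
    by_cases hE : m ≤ g 0
    · have := kWith_le_one_of_last (t := 0) hf hf_last (by simpa using hE)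
      rw [kWith_of_le g m hE]
      omega
    · have h₁ := kWith_le_kWith_step hf hf_step 0
      have h₂ : kWith f m (g 0 - 1) ≤ kWith f m (g 0) + 1 :=
        kWith_le_kWith_add_one hf (by omega)
      have h₃ := kWith_le_three_mul_sub_one hf hf_step hf_last hg (g 0)
      have : 1 ≤ kWith g m (g 0) := by rw [kWith_of_lt g m (by omega)]; omega
      simp only [Nat.zero_sub, zero_add] at h₁
      omega
  · rw [kWith_of_le f m (by omega)]; omega

end Count

section Collection

variable {α : Type*} [DecidableEq α] (P : ℕ → α) (m : ℕ)

def oneCollectionLen (s : ℕ) : ℕ :=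
  min (oneLenF P m s) (min (oneLenF (Pe P m) m s) (oneLenF (Po P m) m s))

lemma add_oneCollectionLen (s : ℕ) :
    s + oneCollectionLen P m s =
      min (s + oneLenF (P ∘ id) m s)
        (min (s + oneLenF (P ∘ peIndex m) m s) (s + oneLenF (P ∘ phiIndex m) m s)) := by
  rw [oneCollectionLen, Pe_eq_comp, Po_eq_comp, min_add_add_left, min_add_add_left]
  rfl

lemma monotone_add_oneCollectionLen : Monotone fun s => s + oneCollectionLen P m s := by
  simp only [add_oneCollectionLen]
  exact (monotone_add_oneLenF _ m).min
    ((monotone_add_oneLenF _ m).min (monotone_add_oneLenF _ m))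

variable {m}

lemma sub_one_le_add_oneCollectionLen {t : ℕ} (ht : t < m) :
    t - 1 + oneLenF P m (t - 1) - 1 ≤ t + oneCollectionLen P m t := by
  rw [add_oneCollectionLen]
  exact le_min ((isLocalShuffle_id m).sub_one_le_add_oneLenF_comp ht) <|
    le_min ((isLocalShuffle_peIndex m).sub_one_le_add_oneLenF_comp ht)
      ((isLocalShuffle_phiIndex m).sub_one_le_add_oneLenF_comp ht)

lemma le_add_oneCollectionLen {t : ℕ} (ht : t < m)
    (hlast : m ≤ t - 1 + oneLenF P m (t - 1)) : m ≤ t + oneCollectionLen P m t := by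
  rw [add_oneCollectionLen]
  exact le_min ((isLocalShuffle_id m).le_add_oneLenF_comp ht hlast) <|
    le_min ((isLocalShuffle_peIndex m).le_add_oneLenF_comp ht hlast)
      ((isLocalShuffle_phiIndex m).le_add_oneLenF_comp ht hlast)

end Collection

theorem one_collection_size_bound_general {α : Type*} [DecidableEq α] (P : ℕ → α) (m : ℕ) :
    kWith (fun s => min (oneLenF P m s)
        (min (oneLenF (Pe P m) m s) (oneLenF (Po P m) m s))) m 0 ≤
      min (3 * kWith (fun s => oneLenF P m s) m 0 - 2) m :=
  le_min
    (kWith_zero_le_three_mul_sub_two (monotone_add_oneCollectionLen P m)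
      (fun _ => sub_one_le_add_oneCollectionLen P) (fun _ => le_add_oneCollectionLen P)
      (fun _ => one_le_oneLenF))
    (kWith_le_sub _ m 0)

/-- If k' is the size of the minimal (greedy) 1-factorization of P and k
is the common size of the factorizations in the 1-collection of P, P_e, P_o, then
k ≤ min(3k' − 2, m). -/
theorem one_collection_size_bound {α : Type*} [DecidableEq α] (P : ℕ → α) (m : ℕ)
    (hm : 1 ≤ m) :
    kWith (fun s => min (oneLenF P m s)
        (min (oneLenF (Pe P m) m s) (oneLenF (Po P m) m s))) m 0 ≤
      min (3 * kWith (fun s => oneLenF P m s) m 0 - 2) m :=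
  one_collection_size_bound_general P m
end
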